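/- arXiv:1911.01890 — 2 statements merged into one kernel-verified Lean document; each statement's English description precedes it below -/
import Mathlib

section
/- For natural numbers P, K1, K2 with K1 + K2 ≤ P and P ≥ 1, we have 1 − C(P−K1, K2)/C(P, K2) ≤ K1·K2/P. -/
lemma aux_choose (P k : ℕ) : ∀ K1, K1 + (k + 1) ≤ P →
    P.choose (k + 1) ≤ (P - K1).choose (k + 1) + K1 * (P - 1).choose k := by
  intro K1
  induction K1 with
  | zero => simp
  | succ K1 ih =>
    intro h
    have ih' := ih (by omega)
    have hm : P - K1 = (P - (K1 + 1)) + 1 := by omega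
    have hps : (P - K1).choose (k + 1)
        = (P - (K1 + 1)).choose k + (P - (K1 + 1)).choose (k + 1) := by
      rw [hm, Nat.choose_succ_succ]
    have hle : (P - (K1 + 1)).choose k ≤ (P - 1).choose k :=
      Nat.choose_le_choose k (by omega)
    have : (K1 + 1) * (P - 1).choose k = (P - 1).choose k + K1 * (P - 1).choose k := by ring
    omega

theorem stmt_4 (P K1 K2 : ℕ) (h : K1 + K2 ≤ P) (hP : 1 ≤ P) :
    1 - (Nat.choose (P - K1) K2 : ℝ) / (Nat.choose P K2)
      ≤ (K1 : ℝ) * K2 / P := by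
  rcases K2 with _ | k
  · simp
  · have hb : 0 < P.choose (k + 1) := Nat.choose_pos (by omega)
    have hmul : P * (P - 1).choose k = P.choose (k + 1) * (k + 1) := by
      have := Nat.add_one_mul_choose_eq (P - 1) k
      have hp : P - 1 + 1 = P := by omega
      simp only [Nat.succ_eq_add_one, hp] at this
      exact this
    have keyN : P * P.choose (k + 1)
        ≤ P * (P - K1).choose (k + 1) + K1 * (k + 1) * P.choose (k + 1) := by
      calc P * P.choose (k + 1)
          ≤ P * ((P - K1).choose (k + 1) + K1 * (P - 1).choose k) :=
            Nat.mul_le_mul_left _ (aux_choose P k K1 h)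
        _ = P * (P - K1).choose (k + 1) + K1 * (P * (P - 1).choose k) := by ring
        _ = P * (P - K1).choose (k + 1) + K1 * (k + 1) * P.choose (k + 1) := by
            rw [hmul]; ring
    have hbR : (0:ℝ) < P.choose (k + 1) := by exact_mod_cast hb
    have hPR : (0:ℝ) < P := by exact_mod_cast hP
    have key' : (P:ℝ) * P.choose (k + 1)
        ≤ P * (P - K1).choose (k + 1) + K1 * (k + 1) * P.choose (k + 1) := by
      exact_mod_cast keyN
    rw [sub_le_iff_le_add, div_add_div _ _ hPR.ne' hbR.ne', le_div_iff₀ (by positivity)]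
    push_cast
    nlinarith [key']
end

section
/- Let (P_n), (K1_n), (K2_n) be sequences of natural numbers with K1_n + K2_n ≤ P_n and P_n ≥ 1 for all n, and suppose K1_n·K2_n/P_n → 0 as n → ∞. Then 1 − C(P_n−K1_n, K2_n)/C(P_n, K2_n) is asymptotically equivalent to K1_n·K2_n/P_n, i.e., their ratio tends to 1 (assuming K1_n, K2_n ≥ 1 for all n). -/
/-!
Writing `a i = k / (p - i)`, the ratio `C(p - k, m) / C(p, m)` is `∏_{i < m} (1 - a i)`.
Weierstrass' product inequality and `1 - a ≤ exp (-a)` put `1 - ∏ (1 - a i)` between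
`1 - exp (-S)` and `S = ∑ a i`, and `k m / p ≤ S ≤ k m / (p - m + 1)`. With `x = k m / p` this
gives `x / (1 + x) ≤ 1 - C(p - k, m) / C(p, m) ≤ x / (1 - x)`, and both bounds divided by `x`
tend to `1` as `x → 0`.
-/

open Filter Finset

theorem Finset.one_sub_sum_le_prod_one_sub {ι R : Type*} [CommRing R] [LinearOrder R]
    [IsStrictOrderedRing R] (s : Finset ι) {f : ι → R} (h0 : ∀ i ∈ s, 0 ≤ f i)
    (h1 : ∀ i ∈ s, f i ≤ 1) : 1 - ∑ i ∈ s, f i ≤ ∏ i ∈ s, (1 - f i) := by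
  classical
  induction s using Finset.induction_on with
  | empty => simp
  | insert a s ha ih =>
    rw [sum_insert ha, prod_insert ha]
    have hfa : 0 ≤ 1 - f a := sub_nonneg.2 (h1 a (mem_insert_self a s))
    have hsum : 0 ≤ f a * ∑ i ∈ s, f i :=
      mul_nonneg (h0 a (mem_insert_self a s)) (sum_nonneg fun i hi => h0 i (mem_insert_of_mem hi))
    have ih' := ih (fun i hi => h0 i (mem_insert_of_mem hi)) fun i hi => h1 i (mem_insert_of_mem hi)
    nlinarith [mul_le_mul_of_nonneg_left ih' hfa]

theorem Real.prod_one_sub_le_exp_neg_sum {ι : Type*} (s : Finset ι) {f : ι → ℝ}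
    (h1 : ∀ i ∈ s, f i ≤ 1) : ∏ i ∈ s, (1 - f i) ≤ Real.exp (-∑ i ∈ s, f i) := by
  rw [← sum_neg_distrib, Real.exp_sum]
  exact prod_le_prod (fun i hi => sub_nonneg.2 (h1 i hi)) fun i _ => Real.one_sub_le_exp_neg _

theorem Real.div_one_add_le_one_sub_exp_neg {t : ℝ} (ht : 0 ≤ t) :
    t / (1 + t) ≤ 1 - Real.exp (-t) := by
  have hexp : Real.exp (-t) ≤ (1 + t)⁻¹ := by
    rw [Real.exp_neg]
    exact inv_anti₀ (by positivity) (by linarith [Real.add_one_le_exp t])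
  have : t / (1 + t) = 1 - (1 + t)⁻¹ := by field_simp; ring
  linarith

theorem Nat.cast_choose_sub_div_choose {K : Type*} [Field K] [CharZero K] {p k m : ℕ}
    (h : k + m ≤ p) :
    ((p - k).choose m : K) / p.choose m = ∏ i ∈ range m, (1 - k / ((p : K) - i)) := by
  have hfac : (m.factorial : K) ≠ 0 := Nat.cast_ne_zero.2 m.factorial_ne_zero
  have hchoose (a : ℕ) :
      (a.choose m : K) = (∏ i ∈ range m, ((a - i : ℕ) : K)) / m.factorial := by
    rw [← Nat.cast_prod, ← Nat.descFactorial_eq_prod_range,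
      Nat.descFactorial_eq_factorial_mul_choose, Nat.cast_mul, mul_div_cancel_left₀ _ hfac]
  rw [hchoose, hchoose, div_div_div_cancel_right₀ hfac, ← prod_div_distrib]
  refine prod_congr rfl fun i hi => ?_
  have hi : i < m := mem_range.1 hi
  have hpi : ((p : K) - i) ≠ 0 := by
    rw [sub_ne_zero]; exact_mod_cast (by omega : p ≠ i)
  rw [Nat.cast_sub (by omega), Nat.cast_sub (by omega), Nat.cast_sub (by omega)]
  field_simp
  ring

theorem Nat.cast_div_cast_sub_mem_Icc {p k m i : ℕ} (h : k + m ≤ p) (hi : i < m) :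
    (k / ((p : ℝ) - i)) ∈ Set.Icc 0 1 := by
  have hki : (k : ℝ) + i < p := by exact_mod_cast (by omega : k + i < p)
  have hpos : (0 : ℝ) < p - i := by linarith [k.cast_nonneg (α := ℝ)]
  exact ⟨div_nonneg k.cast_nonneg hpos.le, (div_le_one hpos).2 (by linarith)⟩

theorem Nat.cast_mul_div_le_sum_div_sub {p k m : ℕ} (h : m ≤ p) :
    (k * m / p : ℝ) ≤ ∑ i ∈ range m, k / ((p : ℝ) - i) := by
  have hconst : (k * m / p : ℝ) = ∑ _i ∈ range m, (k / p : ℝ) := by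
    rw [sum_const, card_range, nsmul_eq_mul]; ring
  rw [hconst]
  refine sum_le_sum fun i hi => ?_
  have hi : (i : ℝ) < p := by exact_mod_cast (mem_range.1 hi).trans_le h
  exact div_le_div_of_nonneg_left k.cast_nonneg (by linarith)
    (by linarith [i.cast_nonneg (α := ℝ)])

theorem Nat.sum_div_sub_le_cast_mul_div {p k m : ℕ} (h : m ≤ p) :
    ∑ i ∈ range m, k / ((p : ℝ) - i) ≤ k * m / ((p : ℝ) - m + 1) := by
  have hconst : (k * m / ((p : ℝ) - m + 1)) = ∑ _i ∈ range m, (k / ((p : ℝ) - m + 1)) := by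
    rw [sum_const, card_range, nsmul_eq_mul]; ring
  rw [hconst]
  refine sum_le_sum fun i hi => ?_
  have hi : (i : ℝ) + 1 ≤ m := by exact_mod_cast mem_range.1 hi
  have hm : (m : ℝ) ≤ p := by exact_mod_cast h
  exact div_le_div_of_nonneg_left k.cast_nonneg (by linarith [i.cast_nonneg (α := ℝ)])
    (by linarith)

theorem Nat.div_one_add_le_one_sub_cast_choose_sub_div_choose {p k m : ℕ} (h : k + m ≤ p) :
    (k * m / p : ℝ) / (1 + k * m / p) ≤ 1 - ((p - k).choose m : ℝ) / p.choose m := by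
  have hx : (0 : ℝ) ≤ k * m / p := by positivity
  have hxS := Nat.cast_mul_div_le_sum_div_sub (k := k) (by omega : m ≤ p)
  have hprod := Real.prod_one_sub_le_exp_neg_sum (range m) (f := fun i => k / ((p : ℝ) - i))
    fun i hi => (Nat.cast_div_cast_sub_mem_Icc h (mem_range.1 hi)).2
  calc (k * m / p : ℝ) / (1 + k * m / p) ≤ 1 - Real.exp (-(k * m / p)) :=
        Real.div_one_add_le_one_sub_exp_neg hx
    _ ≤ 1 - Real.exp (-∑ i ∈ range m, k / ((p : ℝ) - i)) := by gcongr
    _ ≤ 1 - ((p - k).choose m : ℝ) / p.choose m := by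
        rw [Nat.cast_choose_sub_div_choose h]; linarith

theorem Nat.one_sub_cast_choose_sub_div_choose_le {p k m : ℕ} (h : k + m ≤ p) (hk : 1 ≤ k)
    (hx : (k * m / p : ℝ) < 1) :
    1 - ((p - k).choose m : ℝ) / p.choose m ≤ (k * m / p : ℝ) / (1 - k * m / p) := by
  have hp : (0 : ℝ) < p := by exact_mod_cast (by omega : 0 < p)
  have hkm : (0 : ℝ) < p - k * m := by
    rw [div_lt_one hp] at hx; linarith
  have hm : (m : ℝ) ≤ k * m := le_mul_of_one_le_left m.cast_nonneg (by exact_mod_cast hk)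
  have hweier := one_sub_sum_le_prod_one_sub (range m) (f := fun i => k / ((p : ℝ) - i))
    (fun i hi => (Nat.cast_div_cast_sub_mem_Icc h (mem_range.1 hi)).1)
    fun i hi => (Nat.cast_div_cast_sub_mem_Icc h (mem_range.1 hi)).2
  have hsum := Nat.sum_div_sub_le_cast_mul_div (k := k) (by omega : m ≤ p)
  have hx' : (k * m / p : ℝ) / (1 - k * m / p) = k * m / (p - k * m) := by
    field_simp
  calc 1 - ((p - k).choose m : ℝ) / p.choose m ≤ ∑ i ∈ range m, k / ((p : ℝ) - i) := by
        rw [Nat.cast_choose_sub_div_choose h]; linarith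
    _ ≤ k * m / ((p : ℝ) - m + 1) := hsum
    _ ≤ (k * m / p : ℝ) / (1 - k * m / p) := by
        rw [hx']
        exact div_le_div_of_nonneg_left (by positivity) hkm (by linarith)

theorem stmt_6_general (P K1 K2 : ℕ → ℕ)
    (hle : ∀ n, K1 n + K2 n ≤ P n)
    (hK1 : ∀ n, 1 ≤ K1 n) (hK2 : ∀ n, 1 ≤ K2 n)
    (h0 : Filter.Tendsto (fun n => (K1 n : ℝ) * K2 n / P n) Filter.atTop (nhds 0)) :
    Filter.Tendsto
      (fun n => (1 - (Nat.choose (P n - K1 n) (K2 n) : ℝ) / (Nat.choose (P n) (K2 n)))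
        / ((K1 n : ℝ) * K2 n / P n)) Filter.atTop (nhds 1) := by
  set x := fun n => (K1 n : ℝ) * K2 n / P n
  set y := fun n => 1 - (Nat.choose (P n - K1 n) (K2 n) : ℝ) / (Nat.choose (P n) (K2 n))
  have hx (n : ℕ) : 0 < x n := by
    have hP : 0 < P n := by linarith [hle n, hK1 n]
    exact div_pos (mul_pos (by exact_mod_cast hK1 n) (by exact_mod_cast hK2 n))
      (by exact_mod_cast hP)
  have hlow (n : ℕ) : (1 + x n)⁻¹ ≤ y n / x n := by
    rw [le_div_iff₀ (hx n), inv_mul_eq_div]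
    exact Nat.div_one_add_le_one_sub_cast_choose_sub_div_choose (hle n)
  have hup : ∀ᶠ n in atTop, y n / x n ≤ (1 - x n)⁻¹ := by
    filter_upwards [h0.eventually (gt_mem_nhds one_pos)] with n hn
    rw [div_le_iff₀ (hx n), inv_mul_eq_div]
    exact Nat.one_sub_cast_choose_sub_div_choose_le (hle n) (hK1 n) hn
  have hlim_low : Tendsto (fun n => (1 + x n)⁻¹) atTop (nhds 1) := by
    simpa using (h0.const_add 1).inv₀ (by norm_num)
  have hlim_up : Tendsto (fun n => (1 - x n)⁻¹) atTop (nhds 1) := by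
    simpa using (h0.const_sub 1).inv₀ (by norm_num)
  exact tendsto_of_tendsto_of_tendsto_of_le_of_le' hlim_low hlim_up (.of_forall hlow) hup

theorem stmt_6 (P K1 K2 : ℕ → ℕ)
    (hle : ∀ n, K1 n + K2 n ≤ P n) (hP : ∀ n, 1 ≤ P n)
    (hK1 : ∀ n, 1 ≤ K1 n) (hK2 : ∀ n, 1 ≤ K2 n)
    (h0 : Filter.Tendsto (fun n => (K1 n : ℝ) * K2 n / P n) Filter.atTop (nhds 0)) :
    Filter.Tendsto
      (fun n => (1 - (Nat.choose (P n - K1 n) (K2 n) : ℝ) / (Nat.choose (P n) (K2 n)))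
        / ((K1 n : ℝ) * K2 n / P n)) Filter.atTop (nhds 1) :=
  stmt_6_general P K1 K2 hle hK1 hK2 h0
end
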